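/- arXiv:math/0411278 — 4 statements merged into one kernel-verified Lean document; each statement's English description precedes it below -/
import Mathlib

section
/- Let β > 1 be a Pisot–Vijayaraghavan number of degree s with Galois conjugates β₁,…,β_{s−1} all of modulus strictly less than 1. Then for every polynomial A(X) with integer coefficients such that A(β) ≠ 0, one has |A(β)| ≥ M^{1−s} · ∏_{k=1}^{s−1}(1 − |β_k|), where M is the maximum of the absolute values of the coefficients of A. -/
/-!
The product of `A` over all complex roots of the minimal polynomial `P` of `β` is the resultant
`Res(P, A)`, a rational integer. It is nonzero because the irreducible `P` does not divide `A`
over `ℚ`, so its absolute value is at least `1`. For each conjugate `βₖ` in the unit disc the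
geometric series bounds `|A(βₖ)| (1 - |βₖ|)` by `M`, and dividing out these `s - 1` factors
leaves the lower bound for `|A(β)|`.
-/

open Polynomial

namespace Polynomial

theorem Monic.prod_aeval_aroots_eq_resultant {R Ω : Type*} [CommRing R] [Field Ω] [Algebra R Ω]
    {P : R[X]} (hP : P.Monic) (hsplit : (P.map (algebraMap R Ω)).Splits) (A : R[X]) :
    ((P.aroots Ω).map fun α => aeval α A).prod = algebraMap R Ω (resultant P A) := by
  rw [← resultant_map_map, ← hP.natDegree_map (algebraMap R Ω),
    resultant_eq_prod_eval _ _ _ natDegree_map_le hsplit, (hP.map _).leadingCoeff, one_pow,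
    one_mul, aroots_def]
  simp only [eval_map_algebraMap]

theorem resultant_minpoly_ne_zero {R : Type*} (K : Type*) {L : Type*} [CommRing R] [IsDomain R]
    [IsIntegrallyClosed R] [Field K] [Algebra R K] [IsFractionRing R K] [Field L] [Algebra R L]
    [Algebra K L] [IsScalarTower R K L] {x : L} (hx : IsIntegral R x) {A : R[X]}
    (hA : aeval x A ≠ 0) : resultant (minpoly R x) A ≠ 0 := by
  have hinj := IsFractionRing.injective R K
  have hmin : (minpoly R x).map (algebraMap R K) = minpoly K x :=
    (minpoly.isIntegrallyClosed_eq_field_fractions' K hx).symm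
  have hcoprime : IsCoprime (minpoly K x) (A.map (algebraMap R K)) := by
    refine (minpoly.irreducible hx.tower_top).coprime_iff_not_dvd.mpr fun hdvd => hA ?_
    rw [← aeval_map_algebraMap K]
    exact minpoly.dvd_iff.mp hdvd
  rw [Ne, ← (injective_iff_map_eq_zero' _).mp hinj, ← resultant_map_map,
    ← natDegree_map_eq_of_injective hinj, ← natDegree_map_eq_of_injective hinj A, hmin,
    resultant_eq_zero_iff]
  exact fun h => h.2 hcoprime

theorem norm_eval_mul_one_sub_norm_le {𝕜 : Type*} [NormedField 𝕜] (p : 𝕜[X]) {M : ℝ}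
    (hM : ∀ i, ‖p.coeff i‖ ≤ M) {z : 𝕜} (hz : ‖z‖ < 1) : ‖p.eval z‖ * (1 - ‖z‖) ≤ M := by
  have hM0 : 0 ≤ M := (norm_nonneg _).trans (hM 0)
  calc ‖p.eval z‖ * (1 - ‖z‖)
      ≤ (∑ i ∈ Finset.range (p.natDegree + 1), M * ‖z‖ ^ i) * (1 - ‖z‖) := by
        rw [eval_eq_sum_range]
        refine mul_le_mul_of_nonneg_right
          ((norm_sum_le _ _).trans (Finset.sum_le_sum fun i _ => ?_)) (by linarith)
        rw [norm_mul, norm_pow]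
        exact mul_le_mul_of_nonneg_right (hM i) (by positivity)
    _ = M * (1 - ‖z‖ ^ (p.natDegree + 1)) := by
        rw [← Finset.mul_sum, mul_assoc, geom_sum_mul_neg]
    _ ≤ M := mul_le_of_le_one_right hM0 (by simp)

theorem natAbs_coeff_le_sup (A : ℤ[X]) (i : ℕ) :
    (A.coeff i).natAbs ≤ A.support.sup fun j => (A.coeff j).natAbs := by
  by_cases hi : i ∈ A.support
  · exact Finset.le_sup (f := fun j => (A.coeff j).natAbs) hi
  · simp [notMem_support_iff.mp hi]

end Polynomial

theorem one_le_prod_norm_aeval_aroots_minpoly {L : Type*} [Field L] [CharZero L] {x : L}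
    (hx : IsIntegral ℤ x) {A : ℤ[X]} (hA : aeval x A ≠ 0) :
    1 ≤ (((minpoly ℤ x).aroots ℂ).map fun α => ‖aeval α A‖).prod := by
  have hnorm : ‖(((minpoly ℤ x).aroots ℂ).map fun α => aeval α A).prod‖ =
      (((minpoly ℤ x).aroots ℂ).map fun α => ‖aeval α A‖).prod := by
    simpa [Multiset.map_map] using
      map_multiset_prod (normHom : ℂ →*₀ ℝ) (((minpoly ℤ x).aroots ℂ).map fun α => aeval α A)
  rw [← hnorm, (minpoly.monic hx).prod_aeval_aroots_eq_resultant (IsAlgClosed.splits _),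
    algebraMap_int_eq, eq_intCast, Complex.norm_intCast]
  exact_mod_cast Int.one_le_abs (resultant_minpoly_ne_zero ℚ hx hA)

theorem garsia_separation_general
    (β : ℝ) (hint : IsIntegral ℤ β)
    (s : ℕ) (hs : 1 ≤ s)
    (conj : Fin (s - 1) → ℂ)
    (hconj : ∀ k, ‖conj k‖ < 1)
    (hroots : (minpoly ℤ β).aroots ℂ =
      (β : ℂ) ::ₘ Multiset.map conj (Finset.univ.val : Multiset (Fin (s - 1))))
    (A : Polynomial ℤ) (hA : Polynomial.aeval β A ≠ 0) :
    ((A.support.sup fun i => (A.coeff i).natAbs : ℕ) : ℝ) ^ ((1 : ℤ) - s) *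
        ∏ k, (1 - ‖conj k‖) ≤ |Polynomial.aeval β A| := by
  set M : ℕ := A.support.sup fun i => (A.coeff i).natAbs
  have hnorm : 1 ≤ |aeval β A| * ∏ k, ‖aeval (conj k) A‖ := by
    have := one_le_prod_norm_aeval_aroots_minpoly hint hA
    rwa [hroots, Multiset.map_cons, Multiset.prod_cons, Multiset.map_map, ← Complex.coe_algebraMap,
      aeval_algebraMap_apply, Complex.coe_algebraMap, Complex.norm_real, Real.norm_eq_abs] at this
  have hconj_bound (k : Fin (s - 1)) : ‖aeval (conj k) A‖ * (1 - ‖conj k‖) ≤ M := by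
    rw [← eval_map_algebraMap]
    refine norm_eval_mul_one_sub_norm_le _ (fun i => ?_) (hconj k)
    rw [coeff_map, algebraMap_int_eq, eq_intCast, Complex.norm_intCast, ← Int.cast_abs,
      Int.abs_eq_natAbs]
    exact_mod_cast natAbs_coeff_le_sup A i
  have hprod : (∏ k, ‖aeval (conj k) A‖) * ∏ k, (1 - ‖conj k‖) ≤ (M : ℝ) ^ (s - 1) := by
    rw [← Finset.prod_mul_distrib]
    simpa using Finset.prod_le_prod (s := Finset.univ) (fun k _ => mul_nonneg (norm_nonneg _)
      (sub_nonneg.mpr (hconj k).le)) fun k _ => hconj_bound k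
  have hC : 0 < ∏ k, (1 - ‖conj k‖) := Finset.prod_pos fun k _ => sub_pos.mpr (hconj k)
  -- otherwise `hprod` forces `∏ ‖A(βₖ)‖ ≤ 0`, contradicting `hnorm`
  have hMpos : 0 < (M : ℝ) ^ (s - 1) := by nlinarith [abs_nonneg (aeval β A)]
  have hzpow : (M : ℝ) ^ ((1 : ℤ) - s) = ((M : ℝ) ^ (s - 1))⁻¹ := by
    rw [← zpow_natCast, ← zpow_neg, Nat.cast_sub hs]
    ring_nf
  rw [hzpow, inv_mul_le_iff₀ hMpos]
  nlinarith [abs_nonneg (aeval β A)]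

/-- Garsia's separation lemma: if `β` is a PV number of degree `s` with Galois
conjugates `conj k` all of modulus `< 1`, then for every integer polynomial `A`
with `A(β) ≠ 0` one has `|A(β)| ≥ M^(1-s) * ∏ (1 - |βₖ|)`, where `M` is the
maximum of the absolute values of the coefficients of `A`. -/
theorem garsia_separation
    (β : ℝ) (hβ1 : 1 < β) (hint : IsIntegral ℤ β)
    (s : ℕ) (hs : 1 ≤ s) (hdeg : (minpoly ℤ β).natDegree = s)
    (conj : Fin (s - 1) → ℂ)
    (hconj : ∀ k, ‖conj k‖ < 1)
    (hroots : (minpoly ℤ β).aroots ℂ =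
      (β : ℂ) ::ₘ Multiset.map conj (Finset.univ.val : Multiset (Fin (s - 1))))
    (A : Polynomial ℤ) (hA : Polynomial.aeval β A ≠ 0) :
    ((A.support.sup fun i => (A.coeff i).natAbs : ℕ) : ℝ) ^ ((1 : ℤ) - s) *
        ∏ k, (1 - ‖conj k‖) ≤ |Polynomial.aeval β A| :=
  garsia_separation_general β hint s hs conj hconj hroots A hA
end

section
/- Let β be an integer with β ≥ 2, let d ≥ β be an integer, and define the set I_{(β,d)} inductively by I₀ = {0} and I_{n+1} = I_n ∪ { βi + (i' − j) : i ∈ I_n, i' ∈ {0,…,β−1}, j ∈ {0,…,d−1}, −1 < βi + (i'−j) < (d−1)/(β−1) }, with I_{(β,d)} = ⋃_n I_n. Then I_{(β,d)} = {0, 1, …, a−1}, where a is the unique integer satisfying a − 1 < (d−1)/(β−1) ≤ a. -/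
/-- The inductive definition of the carry set `I_{(β,d)}` for the
`(β,d)`-Bernoulli convolution. -/
def carrySet (β d : ℕ) : ℕ → Set ℝ
  | 0 => {0}
  | n + 1 => carrySet β d n ∪
      { y : ℝ | ∃ i ∈ carrySet β d n, ∃ i' < β, ∃ j < d,
          y = (β : ℝ) * i + ((i' : ℝ) - (j : ℝ)) ∧
          -1 < y ∧ y < ((d : ℝ) - 1) / ((β : ℝ) - 1) }

lemma carrySet_forward (β d a : ℕ) (hβ : 2 ≤ β) (h0a : 0 < a)
    (ha2 : ((d : ℝ) - 1) / ((β : ℝ) - 1) ≤ (a : ℝ)) :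
    ∀ n, ∀ x ∈ carrySet β d n, ∃ k : ℕ, k < a ∧ x = (k : ℝ) := by
  intro n
  induction n with
  | zero =>
    intro x hx
    refine ⟨0, h0a, ?_⟩
    simpa [carrySet] using hx
  | succ n ih =>
    intro x hx
    rcases hx with hx | hx
    · exact ih x hx
    · obtain ⟨i, hi, i', hi', j, hj, hxeq, hlo, hhi⟩ := hx
      obtain ⟨k, hk, rfl⟩ := ih i hi
      set m : ℤ := (β : ℤ) * k + i' - j with hm
      have hxm : x = (m : ℝ) := by push_cast [hm]; linarith [hxeq]
      have hm0 : 0 ≤ m := by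
        have : (-1 : ℝ) < (m : ℝ) := by rw [← hxm]; exact hlo
        have := (by exact_mod_cast this : (-1 : ℤ) < m)
        omega
      have hma : m < (a : ℤ) := by
        have : (m : ℝ) < (a : ℝ) := by rw [← hxm]; linarith
        exact_mod_cast this
      refine ⟨m.toNat, ?_, ?_⟩
      · omega
      · rw [hxm]
        exact_mod_cast congrArg (fun z : ℤ => (z : ℝ)) (Int.toNat_of_nonneg hm0).symm

lemma carrySet_backward (β d a : ℕ) (hβ : 2 ≤ β) (hβd : β ≤ d)
    (ha1 : (a : ℝ) - 1 < ((d : ℝ) - 1) / ((β : ℝ) - 1)) :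
    ∀ k, k < a → (k : ℝ) ∈ carrySet β d k := by
  have hβ1 : (1 : ℝ) < (β : ℝ) := by exact_mod_cast hβ
  have hβ0 : (0 : ℝ) < (β : ℝ) - 1 := by linarith
  have hd1 : ((a : ℝ) - 1) * ((β : ℝ) - 1) < (d : ℝ) - 1 := by
    have h := (lt_div_iff₀ hβ0).mp ha1
    linarith
  intro k
  induction k with
  | zero => intro _; simp [carrySet]
  | succ k ih =>
    intro hka
    have hk : k < a := Nat.lt_of_succ_lt hka
    have hik := ih hk
    have hka' : (k : ℝ) + 1 + 1 ≤ (a : ℝ) := by exact_mod_cast hka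
    -- bound : k+1 < (d-1)/(β-1)
    have hbound : ((k : ℕ) : ℝ) + 1 < ((d : ℝ) - 1) / ((β : ℝ) - 1) := by
      have : ((k : ℝ) + 1) ≤ (a : ℝ) - 1 := by linarith
      linarith
    cases k with
    | zero =>
      -- 1 = β*0 + (1 - 0)
      refine Or.inr ⟨((0:ℕ):ℝ), hik, 1, ?_, 0, ?_, ?_, ?_, ?_⟩
      · omega
      · omega
      · push_cast; ring
      · push_cast; linarith
      · push_cast; push_cast at hbound; linarith
    | succ m =>
      -- k+2 = β*(m+1) + (0 - j), j = β*(m+1) - (m+2)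
      have hjle : m + 2 ≤ β * (m + 1) := by nlinarith
      set j : ℕ := β * (m + 1) - (m + 2) with hjdef
      have hjcast : (j : ℝ) = (β : ℝ) * ((m : ℝ) + 1) - ((m : ℝ) + 2) := by
        rw [hjdef]
        push_cast [Nat.cast_sub hjle]
        ring
      have hm2a : ((m : ℝ) + 2) ≤ (a : ℝ) - 1 := by push_cast at hka'; linarith
      have hjd : (j : ℝ) < (d : ℝ) := by
        rw [hjcast]
        have hma : ((m : ℝ) + 1) ≤ (a : ℝ) - 2 := by linarith
        nlinarith
      have hjd' : j < d := by exact_mod_cast hjd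
      refine Or.inr ⟨((m : ℕ) + 1 : ℕ), hik, 0, ?_, j, hjd', ?_, ?_, ?_⟩
      · omega
      · rw [hjcast]; push_cast; ring
      · push_cast; linarith
      · push_cast; push_cast at hbound; linarith

/-- For an integer base `β ≥ 2` and `d ≥ β` digits, `I_{(β,d)} = {0,1,…,a-1}`
where `a` is the unique integer with `a - 1 < (d-1)/(β-1) ≤ a`. -/
theorem carrySet_integer_base
    (β d a : ℕ) (hβ : 2 ≤ β) (hβd : β ≤ d)
    (ha1 : (a : ℝ) - 1 < ((d : ℝ) - 1) / ((β : ℝ) - 1))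
    (ha2 : ((d : ℝ) - 1) / ((β : ℝ) - 1) ≤ (a : ℝ)) :
    (⋃ n, carrySet β d n) = { x : ℝ | ∃ k : ℕ, k < a ∧ x = (k : ℝ) } := by
  have hβ1 : (1 : ℝ) < (β : ℝ) := by exact_mod_cast hβ
  have hβ0 : (0 : ℝ) < (β : ℝ) - 1 := by linarith
  have hd1 : ((β : ℝ) - 1) ≤ (d : ℝ) - 1 := by
    have : (β : ℝ) ≤ (d : ℝ) := by exact_mod_cast hβd
    linarith
  have hB1 : (1 : ℝ) ≤ ((d : ℝ) - 1) / ((β : ℝ) - 1) :=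
    (le_div_iff₀ hβ0).mpr (by linarith)
  have h0a : 0 < a := by
    have : (1 : ℝ) ≤ (a : ℝ) := le_trans hB1 ha2
    exact_mod_cast lt_of_lt_of_le zero_lt_one this
  ext x
  simp only [Set.mem_iUnion, Set.mem_setOf_eq]
  constructor
  · rintro ⟨n, hx⟩
    exact carrySet_forward β d a hβ h0a ha2 n x hx
  · rintro ⟨k, hk, rfl⟩
    exact ⟨k, carrySet_backward β d a hβ hβd ha1 k hk⟩
end

section
/- With the continued-fraction recursion as above (u₀ ≥ 0, uₖ, vₖ > 0 for k ≥ 1, v₀ > 0), set δₙ = |pₙ/qₙ − p_{n−1}/q_{n−1}|. Then for every n ≥ 1, δ_{n+1} ≤ vₙ/(uₙ u_{n+1} + vₙ) · δₙ. In particular, δ_{n+1} ≤ δₙ, i.e., the sequence of consecutive differences of the convergents is nonincreasing. -/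
/-- Lemma (Hölder1, part ii): with `δₙ = |pₙ/qₙ - p_{n-1}/q_{n-1}|`
(here `P n = p_{n-1}`, `Q n = q_{n-1}`, so `δ n = |P(n+1)/Q(n+1) - P n/Q n|`),
one has `δ_{n+1} ≤ vₙ/(uₙ u_{n+1} + vₙ) · δₙ`, and in particular `δ_{n+1} ≤ δₙ`. -/
theorem continued_fraction_differences_decrease
    (u v P Q : ℕ → ℝ)
    (hu0 : 0 ≤ u 0) (hu : ∀ n, 1 ≤ n → 0 < u n) (hv : ∀ n, 0 < v n)
    (hP0 : P 0 = 1) (hP1 : P 1 = u 0)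
    (hQ0 : Q 0 = 0) (hQ1 : Q 1 = 1)
    (hPrec : ∀ n, P (n + 2) = u (n + 1) * P (n + 1) + v n * P n)
    (hQrec : ∀ n, Q (n + 2) = u (n + 1) * Q (n + 1) + v n * Q n)
    (n : ℕ) (hn : 1 ≤ n) :
    |P (n + 2) / Q (n + 2) - P (n + 1) / Q (n + 1)| ≤
        v n / (u n * u (n + 1) + v n) *
          |P (n + 1) / Q (n + 1) - P n / Q n| ∧
      |P (n + 2) / Q (n + 2) - P (n + 1) / Q (n + 1)| ≤
        |P (n + 1) / Q (n + 1) - P n / Q n| := by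
  -- positivity of Q
  have hQ : ∀ m, 0 ≤ Q m ∧ 0 < Q (m + 1) := by
    intro m
    induction m with
    | zero => simp [hQ0, hQ1]
    | succ k ih =>
      refine ⟨ih.2.le, ?_⟩
      rw [hQrec k]
      have hk1 : 0 < u (k + 1) := hu _ (Nat.le_add_left 1 k)
      nlinarith [hv k, ih.1, ih.2]
  obtain ⟨n, rfl⟩ : ∃ m, n = m + 1 := ⟨n - 1, (Nat.succ_pred_eq_of_pos hn).symm⟩
  set m := n + 1 with hm
  have hQm : 0 < Q m := (hQ n).2
  have hQm1 : 0 < Q (m + 1) := (hQ m).2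
  have hQm2 : 0 < Q (m + 2) := (hQ (m + 1)).2
  have hum : 0 < u m := hu m (Nat.le_add_left 1 n)
  have hum1 : 0 < u (m + 1) := hu (m + 1) (by omega)
  have hvm : 0 < v m := hv m
  -- determinant relation
  have hdet : P (m + 2) * Q (m + 1) - P (m + 1) * Q (m + 2)
      = -(v m) * (P (m + 1) * Q m - P m * Q (m + 1)) := by
    rw [hPrec m, hQrec m]; ring
  set A := |P (m + 1) * Q m - P m * Q (m + 1)| with hA
  have hδn : |P (m + 1) / Q (m + 1) - P m / Q m| = A / (Q m * Q (m + 1)) := by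
    rw [div_sub_div _ _ hQm1.ne' hQm.ne', abs_div,
      abs_of_pos (by positivity : (0:ℝ) < Q (m+1) * Q m)]
    rw [show P (m+1) * Q m - Q (m+1) * P m = P (m+1) * Q m - P m * Q (m+1) by ring]
    rw [mul_comm (Q (m+1)) (Q m)]
  have hδn1 : |P (m + 2) / Q (m + 2) - P (m + 1) / Q (m + 1)|
      = v m * A / (Q (m + 1) * Q (m + 2)) := by
    rw [div_sub_div _ _ hQm2.ne' hQm1.ne', abs_div,
      abs_of_pos (by positivity : (0:ℝ) < Q (m+2) * Q (m+1))]
    rw [show P (m+2) * Q (m+1) - Q (m+2) * P (m+1)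
        = P (m+2) * Q (m+1) - P (m+1) * Q (m+2) by ring, hdet]
    rw [abs_mul, abs_neg, abs_of_pos hvm, mul_comm (Q (m+2)) (Q (m+1))]
  have hAnn : 0 ≤ A := abs_nonneg _
  -- key denominator inequality
  have hden : (u m * u (m + 1) + v m) * (Q m * Q (m + 1)) ≤ Q (m + 1) * Q (m + 2) := by
    have h1 : u m * Q m ≤ Q (m + 1) := by
      rw [hm, hQrec n]
      nlinarith [mul_nonneg (hv n).le (hQ n).1]
    have h2 : Q (m + 2) = u (m + 1) * Q (m + 1) + v m * Q m := hQrec m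
    have h3 := mul_le_mul_of_nonneg_right h1 (mul_pos hum1 hQm1).le
    nlinarith [h3]
  have main : v m * A / (Q (m + 1) * Q (m + 2))
      ≤ v m / (u m * u (m + 1) + v m) * (A / (Q m * Q (m + 1))) := by
    rw [div_mul_div_comm]
    apply div_le_div_of_nonneg_left (by positivity) (by positivity) hden
  constructor
  · rw [hδn, hδn1]; exact main
  · rw [hδn, hδn1]
    refine main.trans ?_
    have hc : v m / (u m * u (m + 1) + v m) ≤ 1 := by
      rw [div_le_one (by positivity)]
      nlinarith
    have hd : 0 ≤ A / (Q m * Q (m + 1)) := by positivity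
    nlinarith [mul_le_of_le_one_left hd hc]
end

section
/- Let 0 < p < q with p + q = 1, β = (1+√5)/2. Define μ⟦0^n⟧ = p^{2n−2}·(p, 0)·M^{n−1}·(p/(1−pq), q/(1−pq))ᵀ, where M = [[1,0],[q/p, q/p]]. Then μ⟦0^n⟧ = K'·p^{2n} for a constant K' > 0 independent of n, and consequently lim_{n→∞} log μ⟦0^n⟧ / log|⟦0^n⟧| = log p / log(1/β), where |⟦0^n⟧| = β/β^{2n}. -/
open Matrix

/-- Local dimension of the nonuniform Erdős measure at `0`: with
`μ⟦0ⁿ⟧ = p^{2n-2}·(p,0)·M^{n-1}·(p/(1-pq), q/(1-pq))ᵀ`, `M = [[1,0],[q/p,q/p]]`,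
one has `μ⟦0ⁿ⟧ = K'·p^{2n}` for a constant `K' > 0`, and consequently
`log μ⟦0ⁿ⟧ / log|⟦0ⁿ⟧| → log p / log(1/β)` where `|⟦0ⁿ⟧| = β/β^{2n}`,
`β = (1+√5)/2`. -/
theorem erdos_nonuniform_local_dimension_at_zero
    (p q : ℝ) (hp : 0 < p) (hpq' : p < q) (hpq : p + q = 1)
    (β : ℝ) (hβ : β = (1 + Real.sqrt 5) / 2)
    (M : Matrix (Fin 2) (Fin 2) ℝ) (hM : M = !![1, 0; q / p, q / p])
    (μ0 : ℕ → ℝ)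
    (hμ0 : ∀ n : ℕ, μ0 n = p ^ (2 * n - 2) *
      (![p, 0] ⬝ᵥ ((M ^ (n - 1)).mulVec ![p / (1 - p * q), q / (1 - p * q)]))) :
    (∃ K' : ℝ, 0 < K' ∧ ∀ n : ℕ, 1 ≤ n → μ0 n = K' * p ^ (2 * n)) ∧
      Filter.Tendsto
        (fun n : ℕ => Real.log (μ0 n) / Real.log (β / β ^ (2 * n)))
        Filter.atTop (nhds (Real.log p / Real.log (1 / β))) := by
  have hq : 0 < q := lt_trans hp hpq'
  have hp1 : p < 1 := by linarith
  have hden : 0 < 1 - p * q := by nlinarith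
  set K' : ℝ := 1 / (1 - p * q) with hK'def
  have hK'pos : 0 < K' := by positivity
  have hrow : ∀ k : ℕ, Matrix.vecMul ![p, 0] (M ^ k) = ![p, 0] := by
    intro k
    induction k with
    | zero => simp
    | succ k ih =>
      rw [pow_succ, ← Matrix.vecMul_vecMul, ih, hM]
      funext i
      fin_cases i <;>
        simp [Matrix.vecMul, dotProduct, Fin.sum_univ_two]
  have hval : ∀ n : ℕ, 1 ≤ n → μ0 n = K' * p ^ (2 * n) := by
    intro n hn
    rw [hμ0, Matrix.dotProduct_mulVec, hrow]
    have h1 : (![p, 0] ⬝ᵥ ![p / (1 - p * q), q / (1 - p * q)]) = p ^ 2 * K' := by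
      simp [dotProduct, Fin.sum_univ_two, hK'def]
      ring
    have h2 : p ^ (2 * n) = p ^ (2 * n - 2) * p ^ 2 := by
      rw [← pow_add]; congr 1; omega
    rw [h1, h2]; ring
  refine ⟨⟨K', hK'pos, hval⟩, ?_⟩
  have hβ1 : (1 : ℝ) < β := by
    rw [hβ]
    have : (2 : ℝ) ≤ Real.sqrt 5 := by
      rw [show (2:ℝ) = Real.sqrt 4 from by rw [show (4:ℝ) = 2^2 by norm_num, Real.sqrt_sq]; norm_num]
      exact Real.sqrt_le_sqrt (by norm_num)
    linarith
  have hβ0 : (0 : ℝ) < β := lt_trans one_pos hβ1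
  have hlogβ : 0 < Real.log β := Real.log_pos hβ1
  have hlim : Filter.Tendsto
      (fun n : ℕ => (Real.log K' * (1 / n) + 2 * Real.log p) / ((1 / n - 2) * Real.log β))
      Filter.atTop
      (nhds ((Real.log K' * 0 + 2 * Real.log p) / ((0 - 2) * Real.log β))) := by
    apply Filter.Tendsto.div
    · exact (tendsto_const_nhds.mul tendsto_one_div_atTop_nhds_zero_nat).add tendsto_const_nhds
    · exact (tendsto_one_div_atTop_nhds_zero_nat.sub tendsto_const_nhds).mul tendsto_const_nhds
    · have : ((0:ℝ) - 2) * Real.log β = -2 * Real.log β := by ring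
      rw [this]
      exact mul_ne_zero (by norm_num) hlogβ.ne'
  have heq : (Real.log K' * 0 + 2 * Real.log p) / ((0 - 2) * Real.log β)
      = Real.log p / Real.log (1 / β) := by
    rw [one_div, Real.log_inv]
    field_simp
    ring
  rw [← heq]
  apply hlim.congr'
  filter_upwards [Filter.eventually_ge_atTop 1] with n hn
  have hn0 : (0:ℝ) < (n:ℝ) := by exact_mod_cast Nat.pos_of_ne_zero (by omega)
  rw [hval n hn, Real.log_mul hK'pos.ne' (pow_ne_zero _ hp.ne'), Real.log_pow,
    Real.log_div hβ0.ne' (pow_ne_zero _ hβ0.ne'), Real.log_pow]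
  push_cast
  have hn1 : (1:ℝ) ≤ (n:ℝ) := by exact_mod_cast hn
  have hA : ((1:ℝ) / n - 2) * Real.log β ≠ 0 := by
    have h12 : (1:ℝ) / n - 2 < 0 := by
      have : (1:ℝ)/n ≤ 1 := by rw [div_le_one hn0]; exact hn1
      linarith
    exact (mul_neg_of_neg_of_pos h12 hlogβ).ne
  have hB : Real.log β - 2 * (n:ℝ) * Real.log β ≠ 0 := by
    have h2 : Real.log β - 2 * (n:ℝ) * Real.log β = (1 - 2*(n:ℝ)) * Real.log β := by ring
    rw [h2]
    exact (mul_neg_of_neg_of_pos (by linarith) hlogβ).ne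
  rw [div_eq_div_iff hA hB]
  field_simp
end
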